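/- Let A = {a_1, …, a_m} ⊂ ℝ^d and B ⊂ ℝ^d be finite point sets with m = |A| ≤ |B|, let R > 0 and ε ≥ 0, and suppose ‖a_i − a_j‖ > R(1+ε) for all distinct a_i, a_j ∈ A. Then CDuT(A, B) ≤ R if and only if EMDuT(A, B) ≤ R, and CDuT(A, B) > R(1+ε) if and only if EMDuT(A, B) > R(1+ε). -/
import Mathlib
set_option maxHeartbeats 1000000


open Finset
open scoped Classical

/-- Chamfer distance from finset `A` to finset `B` in `ℝ^d`:
`CD(A,B) = Σ_{a∈A} min_{b∈B} ‖a−b‖` (Euclidean norm). -/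
noncomputable def CD {d : ℕ} (A B : Finset (EuclideanSpace ℝ (Fin d))) : ℝ :=
  ∑ a ∈ A, Metric.infDist a (B : Set (EuclideanSpace ℝ (Fin d)))

/-- The translate `A + t = {a + t : a ∈ A}`. -/
noncomputable def shiftSet {d : ℕ} (A : Finset (EuclideanSpace ℝ (Fin d)))
    (t : EuclideanSpace ℝ (Fin d)) : Finset (EuclideanSpace ℝ (Fin d)) :=
  A.image (· + t)

/-- Chamfer distance under translation: `CDuT(A,B) = inf_{t∈ℝ^d} CD(A+t,B)`. -/
noncomputable def CDuT {d : ℕ} (A B : Finset (EuclideanSpace ℝ (Fin d))) : ℝ :=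
  ⨅ t : EuclideanSpace ℝ (Fin d), CD (shiftSet A t) B

/-- Asymmetric Earth Mover's Distance under translation:
`EMDuT(A,B) = inf_{t} min_{injective f : A → B} Σ_{a∈A} ‖a + t − f(a)‖`. -/
noncomputable def EMDuT {d : ℕ} (A B : Finset (EuclideanSpace ℝ (Fin d))) : ℝ :=
  ⨅ t : EuclideanSpace ℝ (Fin d),
    ⨅ f : {f : {x // x ∈ A} → {x // x ∈ B} // Function.Injective f},
      ∑ a : {x // x ∈ A},
        ‖(a : EuclideanSpace ℝ (Fin d)) + t - ((f.1 a : EuclideanSpace ℝ (Fin d)))‖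

section Aux

variable {d : ℕ}

lemma CD_shift_eq (A B : Finset (EuclideanSpace ℝ (Fin d))) (t : EuclideanSpace ℝ (Fin d)) :
    CD (shiftSet A t) B = ∑ a ∈ A, Metric.infDist (a + t) (B : Set (EuclideanSpace ℝ (Fin d))) := by
  unfold CD shiftSet
  rw [Finset.sum_image]
  intro x _ y _ h
  simpa using h

lemma CD_nonneg (A B : Finset (EuclideanSpace ℝ (Fin d))) : 0 ≤ CD A B :=
  Finset.sum_nonneg fun _ _ => Metric.infDist_nonneg

/-- The EMD sum for a fixed translation and matching. -/
noncomputable def emdSum (A B : Finset (EuclideanSpace ℝ (Fin d)))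
    (t : EuclideanSpace ℝ (Fin d))
    (f : {f : {x // x ∈ A} → {x // x ∈ B} // Function.Injective f}) : ℝ :=
  ∑ a : {x // x ∈ A},
    ‖(a : EuclideanSpace ℝ (Fin d)) + t - ((f.1 a : EuclideanSpace ℝ (Fin d)))‖

lemma emdSum_nonneg (A B : Finset (EuclideanSpace ℝ (Fin d)))
    (t : EuclideanSpace ℝ (Fin d))
    (f : {f : {x // x ∈ A} → {x // x ∈ B} // Function.Injective f}) :
    0 ≤ emdSum A B t f :=
  Finset.sum_nonneg fun _ _ => norm_nonneg _

lemma CD_le_emdSum (A B : Finset (EuclideanSpace ℝ (Fin d)))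
    (t : EuclideanSpace ℝ (Fin d))
    (f : {f : {x // x ∈ A} → {x // x ∈ B} // Function.Injective f}) :
    CD (shiftSet A t) B ≤ emdSum A B t f := by
  rw [CD_shift_eq, emdSum, ← Finset.sum_coe_sort A
    (fun a => Metric.infDist (a + t) (B : Set (EuclideanSpace ℝ (Fin d))))]
  refine Finset.sum_le_sum fun a _ => ?_
  have hb : ((f.1 a : EuclideanSpace ℝ (Fin d))) ∈ (B : Set (EuclideanSpace ℝ (Fin d))) := by
    simpa using (f.1 a).2
  calc Metric.infDist ((a : EuclideanSpace ℝ (Fin d)) + t) (B : Set (EuclideanSpace ℝ (Fin d)))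
      ≤ dist ((a : EuclideanSpace ℝ (Fin d)) + t) (f.1 a : EuclideanSpace ℝ (Fin d)) :=
        Metric.infDist_le_dist_of_mem hb
    _ = ‖(a : EuclideanSpace ℝ (Fin d)) + t - ((f.1 a : EuclideanSpace ℝ (Fin d)))‖ :=
        dist_eq_norm _ _

lemma nonempty_inj (A B : Finset (EuclideanSpace ℝ (Fin d))) (hcard : A.card ≤ B.card) :
    Nonempty {f : {x // x ∈ A} → {x // x ∈ B} // Function.Injective f} := by
  have h : Fintype.card {x // x ∈ A} ≤ Fintype.card {x // x ∈ B} := by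
    simpa [Fintype.card_coe] using hcard
  obtain ⟨e⟩ := Function.Embedding.nonempty_of_card_le h
  exact ⟨⟨e, e.injective⟩⟩

lemma CDuT_le_EMDuT (A B : Finset (EuclideanSpace ℝ (Fin d))) (hcard : A.card ≤ B.card) :
    CDuT A B ≤ EMDuT A B := by
  have hne := nonempty_inj A B hcard
  refine le_ciInf fun t => le_ciInf fun f => ?_
  refine le_trans (ciInf_le ⟨0, ?_⟩ t) (CD_le_emdSum A B t f)
  rintro x ⟨s, rfl⟩
  exact CD_nonneg _ _

/-- Key lemma: if the Chamfer cost at translation `t` is below the separation bound `c`,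
then the nearest-neighbor matching is injective and achieves the same cost. -/
lemma exists_inj_matching (A B : Finset (EuclideanSpace ℝ (Fin d)))
    (hB : B.Nonempty) (t : EuclideanSpace ℝ (Fin d)) (c : ℝ)
    (hc : ∀ a₁ ∈ A, ∀ a₂ ∈ A, a₁ ≠ a₂ → c ≤ ‖a₁ - a₂‖)
    (hCD : CD (shiftSet A t) B < c) :
    ∃ f : {f : {x // x ∈ A} → {x // x ∈ B} // Function.Injective f},
      emdSum A B t f ≤ CD (shiftSet A t) B := by
  have hBc : IsCompact (B : Set (EuclideanSpace ℝ (Fin d))) := B.finite_toSet.isCompact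
  have hBn : (B : Set (EuclideanSpace ℝ (Fin d))).Nonempty := by exact_mod_cast hB
  -- nearest-neighbor map
  have hnear : ∀ a : {x // x ∈ A}, ∃ b : {x // x ∈ B},
      Metric.infDist ((a : EuclideanSpace ℝ (Fin d)) + t) (B : Set (EuclideanSpace ℝ (Fin d)))
        = dist ((a : EuclideanSpace ℝ (Fin d)) + t) (b : EuclideanSpace ℝ (Fin d)) := by
    intro a
    obtain ⟨b, hbB, hbd⟩ := hBc.exists_infDist_eq_dist hBn
      ((a : EuclideanSpace ℝ (Fin d)) + t)
    exact ⟨⟨b, by exact_mod_cast hbB⟩, hbd⟩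
  choose g hg using hnear
  -- each term is bounded by the full sum
  have hterm : ∀ a : {x // x ∈ A},
      Metric.infDist ((a : EuclideanSpace ℝ (Fin d)) + t) (B : Set (EuclideanSpace ℝ (Fin d)))
        ≤ CD (shiftSet A t) B := by
    intro a
    rw [CD_shift_eq]
    exact Finset.single_le_sum (f := fun x => Metric.infDist (x + t)
      (B : Set (EuclideanSpace ℝ (Fin d)))) (fun _ _ => Metric.infDist_nonneg) a.2
  have hpair : ∀ a₁ a₂ : {x // x ∈ A}, a₁ ≠ a₂ →
      Metric.infDist ((a₁ : EuclideanSpace ℝ (Fin d)) + t) (B : Set (EuclideanSpace ℝ (Fin d)))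
        + Metric.infDist ((a₂ : EuclideanSpace ℝ (Fin d)) + t)
            (B : Set (EuclideanSpace ℝ (Fin d)))
        ≤ CD (shiftSet A t) B := by
    intro a₁ a₂ hne
    rw [CD_shift_eq]
    have hne' : (a₁ : EuclideanSpace ℝ (Fin d)) ≠ (a₂ : EuclideanSpace ℝ (Fin d)) := by
      exact fun h => hne (Subtype.ext h)
    calc _ ≤ ∑ a ∈ {(a₁ : EuclideanSpace ℝ (Fin d)), (a₂ : EuclideanSpace ℝ (Fin d))},
          Metric.infDist (a + t) (B : Set (EuclideanSpace ℝ (Fin d))) := by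
          rw [Finset.sum_pair hne']
      _ ≤ _ := by
          refine Finset.sum_le_sum_of_subset_of_nonneg ?_ fun _ _ _ => Metric.infDist_nonneg
          intro x hx
          simp only [Finset.mem_insert, Finset.mem_singleton] at hx
          rcases hx with rfl | rfl
          · exact a₁.2
          · exact a₂.2
  have hginj : Function.Injective g := by
    intro a₁ a₂ hg12
    by_contra hne
    have hlt : c ≤ ‖(a₁ : EuclideanSpace ℝ (Fin d)) - (a₂ : EuclideanSpace ℝ (Fin d))‖ :=
      hc _ a₁.2 _ a₂.2 (fun h => hne (Subtype.ext h))
    have htri : ‖(a₁ : EuclideanSpace ℝ (Fin d)) - (a₂ : EuclideanSpace ℝ (Fin d))‖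
        ≤ dist ((a₁ : EuclideanSpace ℝ (Fin d)) + t) (g a₁ : EuclideanSpace ℝ (Fin d))
          + dist ((a₂ : EuclideanSpace ℝ (Fin d)) + t) (g a₂ : EuclideanSpace ℝ (Fin d)) := by
      rw [hg12]
      have : (a₁ : EuclideanSpace ℝ (Fin d)) - (a₂ : EuclideanSpace ℝ (Fin d))
          = ((a₁ : EuclideanSpace ℝ (Fin d)) + t - (g a₂ : EuclideanSpace ℝ (Fin d)))
            - ((a₂ : EuclideanSpace ℝ (Fin d)) + t - (g a₂ : EuclideanSpace ℝ (Fin d))) := by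
        abel
      rw [this, dist_eq_norm, dist_eq_norm]
      exact norm_sub_le _ _
    have : c ≤ CD (shiftSet A t) B := by
      calc c ≤ _ := hlt
        _ ≤ _ := htri
        _ = _ := by rw [← hg a₁, ← hg a₂]
        _ ≤ CD (shiftSet A t) B := hpair a₁ a₂ hne
    exact absurd hCD (not_lt.mpr this)
  refine ⟨⟨g, hginj⟩, ?_⟩
  rw [emdSum, CD_shift_eq, ← Finset.sum_coe_sort A
    (fun a => Metric.infDist (a + t) (B : Set (EuclideanSpace ℝ (Fin d))))]
  refine le_of_eq (Finset.sum_congr rfl fun a _ => ?_)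
  rw [← dist_eq_norm, ← hg a]

lemma EMDuT_le (A B : Finset (EuclideanSpace ℝ (Fin d)))
    (t : EuclideanSpace ℝ (Fin d))
    (f : {f : {x // x ∈ A} → {x // x ∈ B} // Function.Injective f}) :
    EMDuT A B ≤ emdSum A B t f := by
  have h1 : EMDuT A B ≤ ⨅ f' : {f : {x // x ∈ A} → {x // x ∈ B} // Function.Injective f},
      emdSum A B t f' := by
    refine ciInf_le ⟨0, ?_⟩ t
    rintro x ⟨s, rfl⟩
    exact Real.iInf_nonneg fun f' => emdSum_nonneg A B s f'
  exact h1.trans (ciInf_le ⟨0, by rintro x ⟨f', rfl⟩; exact emdSum_nonneg A B t f'⟩ f)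

end Aux

/-- Under the separation assumption on `A`, the decision problems for Chamfer distance
under translation and Earth Mover's distance under translation coincide:
`CDuT(A,B) ≤ R ↔ EMDuT(A,B) ≤ R` and `CDuT(A,B) > R(1+ε) ↔ EMDuT(A,B) > R(1+ε)`. -/
theorem cdut_iff_emdut_under_separation {d : ℕ}
    (A B : Finset (EuclideanSpace ℝ (Fin d))) (hA : A.Nonempty) (hB : B.Nonempty)
    (m : ℕ) (hm : m = A.card) (hcard : A.card ≤ B.card)
    (R ε : ℝ) (hR : 0 < R) (hε : 0 ≤ ε)
    (hsep : ∀ a₁ ∈ A, ∀ a₂ ∈ A, a₁ ≠ a₂ → R * (1 + ε) < ‖a₁ - a₂‖) :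
    (CDuT A B ≤ R ↔ EMDuT A B ≤ R) ∧
    (CDuT A B > R * (1 + ε) ↔ EMDuT A B > R * (1 + ε)) := by
  have hle := CDuT_le_EMDuT A B hcard
  -- a uniform separation constant strictly above R*(1+ε)
  obtain ⟨c, hcgt, hcsep⟩ : ∃ c, R * (1 + ε) < c ∧
      ∀ a₁ ∈ A, ∀ a₂ ∈ A, a₁ ≠ a₂ → c ≤ ‖a₁ - a₂‖ := by
    rcases eq_or_ne A.offDiag ∅ with hOD | hOD
    · refine ⟨R * (1 + ε) + 1, by linarith, fun a₁ h₁ a₂ h₂ hne => ?_⟩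
      have : (a₁, a₂) ∈ A.offDiag := Finset.mem_offDiag.mpr ⟨h₁, h₂, hne⟩
      simp [hOD] at this
    · have hne : A.offDiag.Nonempty := Finset.nonempty_of_ne_empty hOD
      refine ⟨A.offDiag.inf' hne (fun p => ‖p.1 - p.2‖), ?_, ?_⟩
      · rw [Finset.lt_inf'_iff]
        rintro ⟨a₁, a₂⟩ hp
        obtain ⟨h₁, h₂, hne'⟩ := Finset.mem_offDiag.mp hp
        exact hsep a₁ h₁ a₂ h₂ hne'
      · intro a₁ h₁ a₂ h₂ hne'
        have hmem : (a₁, a₂) ∈ A.offDiag := Finset.mem_offDiag.mpr ⟨h₁, h₂, hne'⟩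
        exact Finset.inf'_le _ hmem
  -- key transfer: CDuT ≤ r implies EMDuT ≤ r, for any r < c
  have key : ∀ r : ℝ, r < c → CDuT A B ≤ r → EMDuT A B ≤ r := by
    intro r hrc hCD
    refine le_of_forall_pos_le_add fun δ hδ => ?_
    set δ' := min δ (c - r) with hδ'
    have hδ'pos : 0 < δ' := lt_min hδ (by linarith)
    have : CDuT A B < r + δ' := lt_of_le_of_lt hCD (by linarith)
    obtain ⟨t, ht⟩ := exists_lt_of_ciInf_lt this
    have htc : CD (shiftSet A t) B < c :=
      lt_of_lt_of_le ht (by have := min_le_right δ (c - r); rw [← hδ'] at this; linarith)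
    obtain ⟨f, hf⟩ := exists_inj_matching A B hB t c hcsep htc
    calc EMDuT A B ≤ emdSum A B t f := EMDuT_le A B t f
      _ ≤ CD (shiftSet A t) B := hf
      _ ≤ r + δ' := le_of_lt ht
      _ ≤ r + δ := by have := min_le_left δ (c - r); rw [← hδ'] at this; linarith
  have hRle : R ≤ R * (1 + ε) := by nlinarith
  constructor
  · exact ⟨fun h => key R (lt_of_le_of_lt hRle hcgt) h, fun h => le_trans hle h⟩
  · constructor
    · intro h
      exact lt_of_lt_of_le h hle
    · intro h
      by_contra hcon
      push_neg at hcon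
      exact absurd (key (R * (1 + ε)) hcgt hcon) (not_le.mpr h)
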